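/- Let $k$ be a perfect field of characteristic $p>0$, $R=k[x_1,\dots,x_n]$, and $F:R_s\to R_t$ the Frobenius. Then the map $\phi:R_t\to H=\mathrm{Hom}_{R_s}(R_t,R_s)$ sending the basis monomial $e_{\bar i}$ to the dual basis element $f_{\overline{p-1}-\bar i}$ is an isomorphism of $R_t$-modules. In particular, $\mathrm{Hom}_{R_s}(R_t,R_s)$ is a free $R_t$-module of rank 1. -/

import Mathlib

open MvPolynomial TensorProduct

noncomputable section

variable (p n : ℕ) [Fact p.Prime] (k : Type*) [Field k] [CharP k p] [PerfectField k]

/-- The source copy of the polynomial ring. -/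
abbrev Rs := MvPolynomial (Fin n) k

/-- The target copy of the polynomial ring (`p` is a phantom parameter recording that we will
view it as an `Rs`-algebra via the Frobenius). -/
def Rt (_ : ℕ) := MvPolynomial (Fin n) k

instance : CommRing (Rt n k p) := inferInstanceAs (CommRing (MvPolynomial (Fin n) k))

/-- The identity of the underlying ring, viewed as a map from the source copy to the target. -/
def toRt : Rs n k →+* Rt n k p := RingHom.id (MvPolynomial (Fin n) k)

/-- The Frobenius map from the source copy to the target copy. -/
def frobTo : Rs n k →+* Rt n k p := (toRt p n k).comp (frobenius (MvPolynomial (Fin n) k) p)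

instance : Algebra (Rs n k) (Rt n k p) := (frobTo p n k).toAlgebra

instance : NeZero p := ⟨(Fact.out : p.Prime).ne_zero⟩

/-- The monomial basis elements `x₁^{i₁} ⋯ xₙ^{iₙ}`, `0 ≤ iⱼ < p`. -/
def eMon (i : Fin n → Fin p) : Rt n k p := toRt p n k (∏ j, X j ^ (i j : ℕ))

/-- The multi-index `(p-1, …, p-1)`. -/
def topIdx : Fin n → Fin p := fun _ => (0 : Fin p).rev

/-- The complementary multi-index `p-1 - ī`. -/
def revIdx (i : Fin n → Fin p) : Fin n → Fin p := fun j => (i j).rev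

/-!
The map `φ` sends `r` to the functional `x ↦ (coefficient of e_{p-1,…,p-1} in r x)`. Indeed
`eᵢ eⱼ = (∏ₗ xₗ^⌊(iₗ + jₗ)/p⌋)^p · e_{(i + j) mod p}`, and since `iₗ + jₗ ≤ 2p - 2` the index
`(i + j) mod p` is the top one exactly when `j = p-1 - i`, in which case there is no carry and the
coefficient is `1`. This description makes `φ` visibly `R_t`-linear, and `φ` is bijective because
it maps the basis `e` onto a permutation of the dual basis `f`.
-/

namespace Module.Basis

variable {R ι : Type*} [CommSemiring R]

theorem constr_coord_comp_equiv_bijective [Finite ι] {M : Type*} [AddCommMonoid M] [Module R M]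
    (b : Basis ι R M) (σ : ι ≃ ι) : Function.Bijective (b.constr ℕ fun i => b.coord (σ i)) := by
  classical
  have h : b.constr ℕ (fun i => b.coord (σ i)) = (b.equiv b.dualBasis σ).toLinearMap :=
    b.ext fun i => by simp [equiv_apply, coe_dualBasis]
  exact h ▸ (b.equiv b.dualBasis σ).bijective

theorem constr_apply_apply_eq_mul {S : Type*} [CommSemiring S] [Algebra R S]
    (b : Basis ι R S) (f : ι → Module.Dual R S) (c : Module.Dual R S)
    (h : ∀ i j, c (b i * b j) = f i (b j)) (r x : S) : b.constr ℕ f r x = c (r * x) := by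
  have hmul : b.constr ℕ f = (LinearMap.mul R S).compr₂ c :=
    b.ext fun i => b.ext fun j => by simp [h]
  rw [hmul]
  rfl

end Module.Basis

theorem Fin.add_eq_rev_zero_iff {m : ℕ} [NeZero m] (a b : Fin m) :
    a + b = (0 : Fin m).rev ↔ (a : ℕ) + b = m - 1 := by
  simp only [Fin.ext_iff, Fin.val_add_eq_ite, Fin.val_rev, Fin.val_zero]
  split_ifs <;> omega

theorem Fin.rev_eq_iff_val_add_val {m : ℕ} (a b : Fin m) : a.rev = b ↔ (a : ℕ) + b = m - 1 := by
  simp only [Fin.ext_iff, Fin.val_rev]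
  omega

omit [PerfectField k] in
theorem smul_eq_toRt_pow_mul (a : Rs n k) (x : Rt n k p) : a • x = toRt p n k (a ^ p) * x :=
  rfl

omit [PerfectField k] in
theorem eMon_mul_eMon (i j : Fin n → Fin p) :
    eMon p n k i * eMon p n k j =
      (∏ l, X l ^ ((i l + j l : ℕ) / p) : Rs n k) • eMon p n k (i + j) := by
  simp only [smul_eq_toRt_pow_mul, eMon, ← map_mul, ← Finset.prod_mul_distrib, ← Finset.prod_pow]
  refine congrArg _ (Finset.prod_congr rfl fun l _ => ?_)
  rw [← pow_add, ← pow_mul, ← pow_add, Pi.add_apply, Fin.val_add, Nat.div_add_mod']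

omit [PerfectField k] in
theorem add_eq_topIdx_iff (i j : Fin n → Fin p) : i + j = topIdx p n ↔ revIdx p n i = j := by
  simp only [funext_iff, Pi.add_apply, topIdx, revIdx, Fin.add_eq_rev_zero_iff,
    Fin.rev_eq_iff_val_add_val]

omit [PerfectField k] in
theorem coord_topIdx_mul (b : Module.Basis (Fin n → Fin p) (Rs n k) (Rt n k p))
    (hb : ∀ i, b i = eMon p n k i) (i j : Fin n → Fin p) :
    b.coord (topIdx p n) (b i * b j) = b.coord (revIdx p n i) (b j) := by
  have hprod : b i * b j = (∏ l, X l ^ ((i l + j l : ℕ) / p) : Rs n k) • b (i + j) := by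
    rw [hb, hb, hb, eMon_mul_eMon]
  rw [hprod, map_smul]
  simp only [Module.Basis.coord_apply, Module.Basis.repr_self, Finsupp.single_apply, smul_eq_mul]
  by_cases hij : revIdx p n i = j
  · have hcarry : ∀ l, ((i l + j l : ℕ) / p) = 0 := fun l => by
      have hl := (Fin.add_eq_rev_zero_iff (i l) (j l)).1 (congrFun ((add_eq_topIdx_iff ..).2 hij) l)
      exact Nat.div_eq_of_lt (by have := NeZero.pos p; omega)
    simp [(add_eq_topIdx_iff ..).2 hij, hij, hcarry]
  · simp [mt (add_eq_topIdx_iff ..).1 hij, Ne.symm hij]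

theorem stmt4 (b : Module.Basis (Fin n → Fin p) (Rs n k) (Rt n k p))
    (hb : ∀ i, b i = eMon p n k i) :
    Function.Bijective (Module.Basis.constr b ℕ fun i => b.coord (revIdx p n i)) ∧
      (∀ (r' r x : Rt n k p),
        (Module.Basis.constr b ℕ fun i => b.coord (revIdx p n i)) (r' * r) x =
          (Module.Basis.constr b ℕ fun i => b.coord (revIdx p n i)) r (r' * x)) := by
  have hrev : Function.Involutive (revIdx p n) := fun i => funext fun l => Fin.rev_rev (i l)
  have hpair := b.constr_apply_apply_eq_mul (fun i => b.coord (revIdx p n i)) (b.coord (topIdx p n))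
    (coord_topIdx_mul p n k b hb)
  refine ⟨b.constr_coord_comp_equiv_bijective hrev.toPerm, fun r' r x => ?_⟩
  rw [hpair, hpair, mul_assoc, mul_left_comm]
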